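/- arXiv:2206.06981 — 6 statements merged into one kernel-verified Lean document; each statement's English description precedes it below -/
import Mathlib

section
/- Every edge labeled path graph satisfies the Universal Difference Property: if G is a path graph with edge labeling α over a commutative ring R, u, w ∈ V(G), and x lies in the sum of the ideals labeling the edges of the unique path from u to w, then there exists a spline ρ on (G, α) with ρ(u) − ρ(w) = x. -/
open SimpleGraph

/-- A generalized spline on an edge labeled graph. -/
def IsSpline {V R : Type*} [CommRing R] (G : SimpleGraph V)
    (α : Sym2 V → Ideal R) (ρ : V → R) : Prop :=
  ∀ u v : V, G.Adj u v → ρ u - ρ v ∈ α s(u, v)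

/-- The sum of the ideals labeling the edges of a walk. -/
def walkIdealSum {V R : Type*} [CommRing R] (G : SimpleGraph V)
    (α : Sym2 V → Ideal R) {u w : V} (p : G.Walk u w) : Ideal R :=
  (p.edges.map α).sum

/-- The intersection of `α(P)` over all paths `P` from `u` to `w`. -/
def pathsInf {V R : Type*} [CommRing R] (G : SimpleGraph V)
    (α : Sym2 V → Ideal R) (u w : V) : Ideal R :=
  ⨅ (p : G.Walk u w) (_ : p.IsPath), walkIdealSum G α p

/-- The Universal Difference Property. -/
def UDP {V R : Type*} [CommRing R] (G : SimpleGraph V)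
    (α : Sym2 V → Ideal R) : Prop :=
  ∀ u w : V, G.Reachable u w → ∀ x ∈ pathsInf G α u w,
    ∃ ρ : V → R, IsSpline G α ρ ∧ ρ u - ρ w = x

/-- A Prüfer domain: every nonzero finitely generated ideal is invertible. -/
def IsPruferDomain (R : Type*) [CommRing R] [IsDomain R] : Prop :=
  ∀ I : Ideal R, I ≠ ⊥ → I.FG →
    IsUnit (I : FractionalIdeal (nonZeroDivisors R) (FractionRing R))

/-- In a path graph, a walk avoiding `u` stays on one side of `u`. -/
lemma pathGraph_side {n : ℕ} {u v w : Fin n} (q : (pathGraph n).Walk v w)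
    (hu : u ∉ q.support) : ∀ z ∈ q.support,
      (u.val < v.val → u.val < z.val) ∧ (v.val < u.val → z.val < u.val) := by
  induction q with
  | nil =>
    intro z hz
    simp only [SimpleGraph.Walk.support_nil, List.mem_singleton] at hz
    subst hz
    exact ⟨id, id⟩
  | @cons a b c h' q ih =>
    intro z hz
    rw [SimpleGraph.Walk.support_cons] at hz hu
    simp only [List.mem_cons] at hz hu
    push_neg at hu
    obtain ⟨hua, huq⟩ := hu
    rcases hz with rfl | hz
    · exact ⟨id, id⟩
    · have hb : b ∈ q.support := q.start_mem_support
      have hub : u.val ≠ b.val := fun hh => huq (Fin.ext hh ▸ hb)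
      have hadj := pathGraph_adj.mp h'
      have := ih huq z hz
      constructor
      · intro hlt
        exact this.1 (by omega)
      · intro hlt
        exact this.2 (by omega)

theorem pathGraph_UDP {R : Type*} [CommRing R] (n : ℕ)
    (α : Sym2 (Fin n) → Ideal R) (u w : Fin n)
    (p : (pathGraph n).Walk u w) (hp : p.IsPath)
    (x : R) (hx : x ∈ walkIdealSum (pathGraph n) α p) :
    ∃ ρ : Fin n → R, IsSpline (pathGraph n) α ρ ∧ ρ u - ρ w = x := by
  induction p generalizing x with
  | nil =>
    simp only [walkIdealSum, SimpleGraph.Walk.edges_nil, List.map_nil, List.sum_nil] at hx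
    rw [Ideal.zero_eq_bot, Ideal.mem_bot] at hx
    exact ⟨0, fun a b _ => by simp, by simp [hx]⟩
  | @cons u v w h q ih =>
    have hq : q.IsPath := hp.of_cons
    have hu : u ∉ q.support := by
      have := hp.support_nodup
      rw [SimpleGraph.Walk.support_cons] at this
      exact (List.nodup_cons.mp this).1
    have hsum : walkIdealSum (pathGraph n) α (SimpleGraph.Walk.cons h q)
        = α s(u, v) ⊔ walkIdealSum (pathGraph n) α q := by
      simp [walkIdealSum, SimpleGraph.Walk.edges_cons]
    rw [hsum] at hx
    obtain ⟨a, ha, y, hy, hay⟩ := Submodule.mem_sup.mp hx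
    obtain ⟨ρ, hρ, hρvw⟩ := ih hq y hy
    have hadj := pathGraph_adj.mp h
    -- P z : z is on u's side of the edge (u, v)
    set P : Fin n → Prop := fun z =>
      if u.val < v.val then z.val ≤ u.val else u.val ≤ z.val with hP
    have hPu : P u := by simp [hP]
    have hPv : ¬ P v := by
      simp only [hP]
      split <;> omega
    have hside := pathGraph_side q hu
    have hPq : ∀ z ∈ q.support, ¬ P z := by
      intro z hz
      have := hside z hz
      simp only [hP]
      split <;> omega
    have hdec : ∀ z, Decidable (P z) := fun z => by
      simp only [hP]; infer_instance
    refine ⟨fun z => if P z then a + ρ v else ρ z, ?_, ?_⟩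
    · intro z₁ z₂ hz
      have hadj' := pathGraph_adj.mp hz
      by_cases h1 : P z₁ <;> by_cases h2 : P z₂ <;>
        simp only [if_pos, if_neg, h1, h2, if_true, if_false]
      · simp
      · -- crossing: z₁ = u, z₂ = v
        have hval : z₁.val = u.val ∧ z₂.val = v.val := by
          simp only [hP] at h1 h2
          split_ifs at h1 h2 with huv <;> omega
        obtain ⟨hz1, hz2⟩ := hval
        have hz1 : z₁ = u := Fin.ext hz1
        have hz2 : z₂ = v := Fin.ext hz2
        rw [hz1, hz2]
        simpa using ha
      · have hval : z₁.val = v.val ∧ z₂.val = u.val := by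
          simp only [hP] at h1 h2
          split_ifs at h1 h2 with huv <;> omega
        obtain ⟨hz1, hz2⟩ := hval
        have hz1 : z₁ = v := Fin.ext hz1
        have hz2 : z₂ = u := Fin.ext hz2
        rw [hz1, hz2]
        have : ρ v - (a + ρ v) = -a := by ring
        rw [this, Sym2.eq_swap]
        exact neg_mem ha
      · exact hρ z₁ z₂ hz
    · have hPw : ¬ P w := hPq w q.end_mem_support
      simp only [if_pos hPu, if_neg hPw]
      have : a + ρ v - ρ w = a + (ρ v - ρ w) := by ring
      rw [this, hρvw, hay]
end

section
/- Every edge labeled tree satisfies the Universal Difference Property: if G is a tree with edge labeling α over a commutative ring R, u, w ∈ V(G), and x ∈ α(P₁) where P₁ is the unique path from u to w, then there exists a spline ρ on (G, α) with ρ(u) − ρ(w) = x. -/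
open SimpleGraph

/-!
Induct along the path `u = v₀, v₁, …, vₙ = w`. Write `x = y + z` with `y ∈ α(u v₁)` and `z` in the
ideal of the rest of the path, and take a spline `ρ'` with `ρ' v₁ - ρ' w = z`. In a tree the edge
`u v₁` is a bridge, so adding a constant `c ∈ α(u v₁)` on the side of `u` keeps `ρ'` a spline; the
choice `c = y + ρ' v₁ - ρ' u` makes the new difference between `u` and `w` equal to `y + z`.
-/

section

variable {V R : Type*} [CommRing R] {G : SimpleGraph V} {α : Sym2 V → Ideal R}

namespace IsSpline

lemma zero : IsSpline G α 0 :=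
  fun a b _ => by simp

lemma add {ρ σ : V → R} (hρ : IsSpline G α ρ) (hσ : IsSpline G α σ) : IsSpline G α (ρ + σ) :=
  fun a b hab => by simpa [add_sub_add_comm] using add_mem (hρ a b hab) (hσ a b hab)

end IsSpline

lemma isSpline_indicator_const {S : Set V} {c : R}
    (h : ∀ a b, G.Adj a b → a ∈ S → b ∉ S → c ∈ α s(a, b)) :
    IsSpline G α (S.indicator fun _ => c) := by
  intro a b hab
  by_cases ha : a ∈ S <;> by_cases hb : b ∈ S <;> simp only [ha, hb, Set.indicator_of_mem,
    Set.indicator_of_notMem, not_false_eq_true, sub_self, sub_zero, zero_sub, zero_mem]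
  · exact h a b hab ha hb
  · rw [Sym2.eq_swap]
    exact neg_mem (h b a hab.symm hb ha)

lemma eq_of_adj_of_reachable_deleteEdges {u v a b : V} (hab : G.Adj a b)
    (ha : (G.deleteEdges {s(u, v)}).Reachable a u)
    (hb : ¬ (G.deleteEdges {s(u, v)}).Reachable b u) : s(a, b) = s(u, v) := by
  by_contra hne
  have hba : (G.deleteEdges {s(u, v)}).Adj b a := by
    rw [deleteEdges_adj, Set.mem_singleton_iff, Sym2.eq_swap]
    exact ⟨hab.symm, hne⟩
  exact hb (hba.reachable.trans ha)

lemma exists_isSpline_of_isBridge {u v w : V} (hbridge : G.IsBridge s(u, v))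
    (hvw : (G.deleteEdges {s(u, v)}).Reachable v w) {ρ' : V → R} (hρ' : IsSpline G α ρ')
    (huv : G.Adj u v) {y : R} (hy : y ∈ α s(u, v)) :
    ∃ ρ : V → R, IsSpline G α ρ ∧ ρ u - ρ w = y + (ρ' v - ρ' w) := by
  set S : Set V := {a | (G.deleteEdges {s(u, v)}).Reachable a u}
  set c : R := y - (ρ' u - ρ' v)
  have hu : u ∈ S := Reachable.refl u
  have hw : w ∉ S := fun hw => hbridge (hvw.trans hw).symm
  have hc : c ∈ α s(u, v) := sub_mem hy (hρ' u v huv)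
  refine ⟨ρ' + S.indicator fun _ => c, hρ'.add (isSpline_indicator_const ?_), ?_⟩
  · intro a b hab ha hb
    rwa [eq_of_adj_of_reachable_deleteEdges hab ha hb]
  · simp only [Pi.add_apply, Set.indicator_of_mem hu, Set.indicator_of_notMem hw, c]
    ring

lemma SimpleGraph.Walk.reachable_deleteEdges_of_notMem_support {a b u v : V} (q : G.Walk a b)
    (hu : u ∉ q.support) : (G.deleteEdges {s(u, v)}).Reachable a b :=
  (q.toDeleteEdges _ fun _ he he' =>
    hu (q.fst_mem_support_of_mem_edges (Set.mem_singleton_iff.mp he' ▸ he))).reachable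

lemma walkIdealSum_nil {u : V} : walkIdealSum G α (Walk.nil : G.Walk u u) = ⊥ := rfl

lemma walkIdealSum_cons {u v w : V} (h : G.Adj u v) (q : G.Walk v w) :
    walkIdealSum G α (Walk.cons h q) = α s(u, v) ⊔ walkIdealSum G α q := by
  simp [walkIdealSum]

lemma SimpleGraph.IsAcyclic.exists_isSpline_sub_eq (hG : G.IsAcyclic) {u w : V} (p : G.Walk u w)
    (hp : p.IsPath) {x : R} (hx : x ∈ walkIdealSum G α p) :
    ∃ ρ : V → R, IsSpline G α ρ ∧ ρ u - ρ w = x := by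
  induction p generalizing x with
  | nil =>
    rw [walkIdealSum_nil, Ideal.mem_bot] at hx
    exact ⟨0, IsSpline.zero, by simp [hx]⟩
  | @cons u v w huv q ih =>
    obtain ⟨hq, hu⟩ := (Walk.cons_isPath_iff huv q).mp hp
    rw [walkIdealSum_cons, Submodule.mem_sup] at hx
    obtain ⟨y, hy, z, hz, rfl⟩ := hx
    obtain ⟨ρ', hρ', hρ'vw⟩ := ih hq hz
    rw [← hρ'vw]
    exact exists_isSpline_of_isBridge (isAcyclic_iff_forall_adj_isBridge.mp hG huv)
      (q.reachable_deleteEdges_of_notMem_support hu) hρ' huv hy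

end

theorem tree_UDP {V R : Type*} [CommRing R] (G : SimpleGraph V) (hG : G.IsTree)
    (α : Sym2 V → Ideal R) (u w : V) (p : G.Walk u w) (hp : p.IsPath)
    (x : R) (hx : x ∈ walkIdealSum G α p) :
    ∃ ρ : V → R, IsSpline G α ρ ∧ ρ u - ρ w = x :=
  hG.isAcyclic.exists_isSpline_sub_eq p hp hx
end

section
/- Let G₁, G₂ be connected edge labeled graphs satisfying UDP, with V(G₁) ∩ V(G₂) = {z}, and let G = G₁ ∪ G₂ be obtained by pasting at z. If u and w both lie in V(G₁) (or both in V(G₂)), then for every x ∈ ⋂_{P ∈ P(u,w)} α(P) taken over all u–w paths in G, there exists a spline ρ on G with ρ(u) − ρ(w) = x. -/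
open SimpleGraph

lemma pathsInf_le_of_le {V R : Type*} [CommRing R] {G G' : SimpleGraph V}
    (h : G ≤ G') (α : Sym2 V → Ideal R) (u w : V) :
    pathsInf G' α u w ≤ pathsInf G α u w := by
  refine le_iInf fun p => le_iInf fun hp => ?_
  have h1 : pathsInf G' α u w ≤ ⨅ (_ : (p.mapLe h).IsPath), walkIdealSum G' α (p.mapLe h) :=
    iInf_le _ _
  have h2 : (⨅ (_ : (p.mapLe h).IsPath), walkIdealSum G' α (p.mapLe h)) ≤
      walkIdealSum G' α (p.mapLe h) := iInf_le _ (hp.mapLe h)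
  have h3 : walkIdealSum G' α (p.mapLe h) = walkIdealSum G α p := by
    unfold walkIdealSum
    rw [SimpleGraph.Walk.mapLe, SimpleGraph.Walk.edges_map, List.map_map]
    congr 1
    apply List.map_congr_left
    intro e _
    induction e using Sym2.ind with
    | _ x y => rfl
  exact h3 ▸ (h1.trans h2)

lemma extend_spline {V R : Type*} [CommRing R] (G₁ G₂ : SimpleGraph V)
    (α : Sym2 V → Ideal R) (S₁ S₂ : Set V) (z : V)
    (hE₁ : ∀ a b, G₁.Adj a b → a ∈ S₁ ∧ b ∈ S₁)
    (hE₂ : ∀ a b, G₂.Adj a b → a ∈ S₂ ∧ b ∈ S₂)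
    (hz : S₁ ∩ S₂ ⊆ {z})
    (ρ₁ : V → R) (hρ₁ : IsSpline G₁ α ρ₁) (u w : V) (hu : u ∈ S₁) (hw : w ∈ S₁) :
    ∃ ρ : V → R, IsSpline (G₁ ⊔ G₂) α ρ ∧ ρ u - ρ w = ρ₁ u - ρ₁ w := by
  classical
  refine ⟨fun v => if v ∈ S₁ then ρ₁ v else ρ₁ z, ?_, by simp [hu, hw]⟩
  intro a b hab
  rcases hab with hab | hab
  · obtain ⟨ha, hb⟩ := hE₁ a b hab
    simpa [ha, hb] using hρ₁ a b hab
  · obtain ⟨ha, hb⟩ := hE₂ a b hab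
    have key : ∀ v ∈ S₂, (if v ∈ S₁ then ρ₁ v else ρ₁ z) = ρ₁ z := by
      intro v hv
      by_cases h : v ∈ S₁
      · have : v = z := hz ⟨h, hv⟩
        simp [h, this]
      · simp [h]
    simp only [key a ha, key b hb, sub_self]
    exact zero_mem _

theorem pasted_UDP_same_side {V R : Type*} [CommRing R]
    (G₁ G₂ : SimpleGraph V) (α : Sym2 V → Ideal R) (S₁ S₂ : Set V) (z : V)
    (hE₁ : ∀ a b, G₁.Adj a b → a ∈ S₁ ∧ b ∈ S₁)
    (hE₂ : ∀ a b, G₂.Adj a b → a ∈ S₂ ∧ b ∈ S₂)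
    (hz : S₁ ∩ S₂ = {z})
    (hc₁ : ∀ a ∈ S₁, ∀ b ∈ S₁, G₁.Reachable a b)
    (hc₂ : ∀ a ∈ S₂, ∀ b ∈ S₂, G₂.Reachable a b)
    (h₁ : UDP G₁ α) (h₂ : UDP G₂ α)
    (u w : V) (huw : (u ∈ S₁ ∧ w ∈ S₁) ∨ (u ∈ S₂ ∧ w ∈ S₂)) :
    ∀ x ∈ pathsInf (G₁ ⊔ G₂) α u w,
      ∃ ρ : V → R, IsSpline (G₁ ⊔ G₂) α ρ ∧ ρ u - ρ w = x := by
  intro x hx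
  rcases huw with ⟨hu, hw⟩ | ⟨hu, hw⟩
  · have hx1 : x ∈ pathsInf G₁ α u w := pathsInf_le_of_le le_sup_left α u w hx
    obtain ⟨ρ₁, hρ₁, hd⟩ := h₁ u w (hc₁ u hu w hw) x hx1
    obtain ⟨ρ, hρ, hd'⟩ := extend_spline G₁ G₂ α S₁ S₂ z hE₁ hE₂ hz.le ρ₁ hρ₁ u w hu hw
    exact ⟨ρ, hρ, hd'.trans hd⟩
  · have hx1 : x ∈ pathsInf G₂ α u w := pathsInf_le_of_le le_sup_right α u w hx
    obtain ⟨ρ₂, hρ₂, hd⟩ := h₂ u w (hc₂ u hu w hw) x hx1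
    have hz' : S₂ ∩ S₁ ⊆ {z} := by rw [Set.inter_comm]; exact hz.le
    obtain ⟨ρ, hρ, hd'⟩ := extend_spline G₂ G₁ α S₂ S₁ z hE₂ hE₁ hz' ρ₂ hρ₂ u w hu hw
    rw [sup_comm]
    exact ⟨ρ, hρ, hd'.trans hd⟩
end

section
/- Let G₁, G₂ be connected edge labeled graphs each satisfying UDP, with V(G₁) ∩ V(G₂) = {z}, and let G = G₁ ∪ G₂ be their pasting at z. Then G satisfies UDP if and only if for all u ∈ V(G₁) and w ∈ V(G₂): ⋂_{P ∈ P(u,w)} α(P) = (⋂_{P ∈ P(u,z)} α(P)) + (⋂_{P ∈ P(z,w)} α(P)). -/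
open SimpleGraph

/-! Every path from `S₁` to `S₂` in the pasted graph passes through `z`, so
`pathsInf u z + pathsInf z w ≤ pathsInf u w` always holds; conversely, under UDP an element of
`pathsInf u w` is `ρ u - ρ w = (ρ u - ρ z) + (ρ z - ρ w)` for a spline `ρ`. When the decomposition
holds, splines on `G₁` and `G₂` realising the two summands glue at `z` once the second is shifted
by a constant. -/

section Splines

variable {V R : Type*} [CommRing R] {α : Sym2 V → Ideal R}

section Paths

variable {G : SimpleGraph V}

lemma walkIdealSum_append {u v w : V} (p : G.Walk u v) (q : G.Walk v w) :
    walkIdealSum G α (p.append q) = walkIdealSum G α p + walkIdealSum G α q := by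
  simp [walkIdealSum, Walk.edges_append]

lemma walkIdealSum_reverse {u w : V} (p : G.Walk u w) :
    walkIdealSum G α p.reverse = walkIdealSum G α p := by
  simp [walkIdealSum, Walk.edges_reverse, List.map_reverse, List.sum_reverse]

lemma pathsInf_le_walkIdealSum {u w : V} {p : G.Walk u w} (hp : p.IsPath) :
    pathsInf G α u w ≤ walkIdealSum G α p :=
  iInf₂_le p hp

lemma pathsInf_comm (u w : V) : pathsInf G α u w = pathsInf G α w u := by
  have key : ∀ a b : V, pathsInf G α a b ≤ pathsInf G α b a := fun a b =>
    le_iInf₂ fun q hq => (pathsInf_le_walkIdealSum hq.reverse).trans_eq (walkIdealSum_reverse q)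
  exact le_antisymm (key u w) (key w u)

lemma pathsInf_self (u : V) : pathsInf G α u u = ⊥ :=
  eq_bot_iff.2 <| (pathsInf_le_walkIdealSum Walk.IsPath.nil).trans_eq (by simp [walkIdealSum])

lemma pathsInf_anti {G' : SimpleGraph V} (h : G ≤ G') (u w : V) :
    pathsInf G' α u w ≤ pathsInf G α u w := by
  refine le_iInf₂ fun p hp => ?_
  have hedges : ∀ e ∈ p.edges, e ∈ G'.edgeSet := fun e he =>
    edgeSet_mono h (p.edges_subset_edgeSet he)
  refine (pathsInf_le_walkIdealSum (hp.transfer hedges)).trans_eq ?_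
  simp only [walkIdealSum, Walk.edges_transfer]

lemma add_pathsInf_le_of_forall_mem_support {u w z : V}
    (h : ∀ p : G.Walk u w, p.IsPath → z ∈ p.support) :
    pathsInf G α u z + pathsInf G α z w ≤ pathsInf G α u w := by
  classical
  refine le_iInf₂ fun p hp => ?_
  have hz := h p hp
  rw [← p.take_spec hz, walkIdealSum_append]
  exact add_le_add (pathsInf_le_walkIdealSum (hp.takeUntil hz))
    (pathsInf_le_walkIdealSum (hp.dropUntil hz))

lemma isSpline_zero : IsSpline G α 0 := fun _ _ _ => by simp

lemma IsSpline.sub_mem_walkIdealSum {ρ : V → R} (hρ : IsSpline G α ρ) {u w : V}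
    (p : G.Walk u w) : ρ u - ρ w ∈ walkIdealSum G α p := by
  induction p with
  | nil => simp
  | @cons u v w h q ih =>
    rw [← sub_add_sub_cancel _ (ρ v), walkIdealSum, Walk.edges_cons, List.map_cons,
      List.sum_cons, Submodule.add_eq_sup]
    exact Submodule.add_mem_sup (hρ u v h) ih

lemma IsSpline.sub_mem_pathsInf {ρ : V → R} (hρ : IsSpline G α ρ) (u w : V) :
    ρ u - ρ w ∈ pathsInf G α u w := by
  simpa only [pathsInf, Submodule.mem_iInf] using fun p _ => hρ.sub_mem_walkIdealSum p

lemma UDP.pathsInf_le_add (hG : UDP G α) {u w : V} (h : G.Reachable u w) (z : V) :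
    pathsInf G α u w ≤ pathsInf G α u z + pathsInf G α z w := by
  intro x hx
  obtain ⟨ρ, hρ, rfl⟩ := hG u w h x hx
  rw [← sub_add_sub_cancel _ (ρ z), Submodule.add_eq_sup]
  exact Submodule.add_mem_sup (hρ.sub_mem_pathsInf u z) (hρ.sub_mem_pathsInf z w)

end Paths

section Pasting

variable {G₁ G₂ : SimpleGraph V} {S₁ S₂ : Set V} {z : V}

lemma mem_union_of_reachable_of_ne (hE₁ : ∀ a b, G₁.Adj a b → a ∈ S₁ ∧ b ∈ S₁)
    (hE₂ : ∀ a b, G₂.Adj a b → a ∈ S₂ ∧ b ∈ S₂) {u w : V} (h : (G₁ ⊔ G₂).Reachable u w)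
    (huw : u ≠ w) : u ∈ S₁ ∪ S₂ := by
  obtain ⟨p⟩ := h
  cases p with
  | nil => exact absurd rfl huw
  | cons h _ =>
    rcases h with h | h
    · exact Or.inl (hE₁ _ _ h).1
    · exact Or.inr (hE₂ _ _ h).1

lemma mem_support_of_mem_left_of_mem_right (hE₁ : ∀ a b, G₁.Adj a b → a ∈ S₁ ∧ b ∈ S₁)
    (hE₂ : ∀ a b, G₂.Adj a b → a ∈ S₂ ∧ b ∈ S₂) (hz : S₁ ∩ S₂ ⊆ {z}) {u w : V}
    (p : (G₁ ⊔ G₂).Walk u w) (hu : u ∈ S₁) (hw : w ∈ S₂) : z ∈ p.support := by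
  induction p with
  | @nil v =>
    obtain rfl : v = z := hz ⟨hu, hw⟩
    simp
  | @cons u v w h q ih =>
    rcases h with h | h
    · exact List.mem_cons_of_mem _ (ih (hE₁ u v h).2 hw)
    · obtain rfl : u = z := hz ⟨hu, (hE₂ u v h).1⟩
      simp

lemma IsSpline.paste (hE₁ : ∀ a b, G₁.Adj a b → a ∈ S₁ ∧ b ∈ S₁)
    (hE₂ : ∀ a b, G₂.Adj a b → a ∈ S₂ ∧ b ∈ S₂) (hz : S₁ ∩ S₂ ⊆ {z}) {ρ₁ ρ₂ : V → R}
    (hρ₁ : IsSpline G₁ α ρ₁) (hρ₂ : IsSpline G₂ α ρ₂) :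
    ∃ ρ : V → R, IsSpline (G₁ ⊔ G₂) α ρ ∧ (∀ v ∈ S₁, ρ v = ρ₁ v) ∧
      ∀ v ∈ S₂, ρ v = ρ₂ v + (ρ₁ z - ρ₂ z) := by
  classical
  set ρ : V → R := fun v => if v ∈ S₂ then ρ₂ v + (ρ₁ z - ρ₂ z) else ρ₁ v
  have hρS₁ : ∀ v ∈ S₁, ρ v = ρ₁ v := by
    intro v hv
    by_cases hv₂ : v ∈ S₂
    · obtain rfl : v = z := hz ⟨hv, hv₂⟩
      simp [ρ, hv₂]
    · simp [ρ, hv₂]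
  have hρS₂ : ∀ v ∈ S₂, ρ v = ρ₂ v + (ρ₁ z - ρ₂ z) := fun v hv => if_pos hv
  refine ⟨ρ, fun a b hab => ?_, hρS₁, hρS₂⟩
  rcases hab with h | h
  · obtain ⟨ha, hb⟩ := hE₁ a b h
    simpa only [hρS₁ a ha, hρS₁ b hb] using hρ₁ a b h
  · obtain ⟨ha, hb⟩ := hE₂ a b h
    simpa only [hρS₂ a ha, hρS₂ b hb, add_sub_add_right_eq_sub] using hρ₂ a b h

lemma exists_isSpline_sup_of_mem_left (hE₁ : ∀ a b, G₁.Adj a b → a ∈ S₁ ∧ b ∈ S₁)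
    (hE₂ : ∀ a b, G₂.Adj a b → a ∈ S₂ ∧ b ∈ S₂) (hz : S₁ ∩ S₂ ⊆ {z}) (h₁ : UDP G₁ α)
    {u w : V} (hu : u ∈ S₁) (hw : w ∈ S₁) (huw : G₁.Reachable u w) {x : R}
    (hx : x ∈ pathsInf (G₁ ⊔ G₂) α u w) :
    ∃ ρ : V → R, IsSpline (G₁ ⊔ G₂) α ρ ∧ ρ u - ρ w = x := by
  obtain ⟨ρ₁, hρ₁, hx₁⟩ := h₁ u w huw x (pathsInf_anti le_sup_left u w hx)
  obtain ⟨ρ, hρ, hρS₁, -⟩ := hρ₁.paste hE₁ hE₂ hz isSpline_zero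
  exact ⟨ρ, hρ, by rw [hρS₁ u hu, hρS₁ w hw, hx₁]⟩

lemma exists_isSpline_sup_of_mem_left_of_mem_right
    (hE₁ : ∀ a b, G₁.Adj a b → a ∈ S₁ ∧ b ∈ S₁) (hE₂ : ∀ a b, G₂.Adj a b → a ∈ S₂ ∧ b ∈ S₂)
    (hz : S₁ ∩ S₂ ⊆ {z}) (h₁ : UDP G₁ α) (h₂ : UDP G₂ α) {u w : V} (hu : u ∈ S₁)
    (hw : w ∈ S₂) (huz : G₁.Reachable u z) (hzw : G₂.Reachable z w) {x : R}
    (hx : x ∈ pathsInf G₁ α u z + pathsInf G₂ α z w) :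
    ∃ ρ : V → R, IsSpline (G₁ ⊔ G₂) α ρ ∧ ρ u - ρ w = x := by
  obtain ⟨x₁, hx₁, x₂, hx₂, rfl⟩ := Submodule.mem_sup.1 hx
  obtain ⟨ρ₁, hρ₁, hd₁⟩ := h₁ u z huz x₁ hx₁
  obtain ⟨ρ₂, hρ₂, hd₂⟩ := h₂ z w hzw x₂ hx₂
  obtain ⟨ρ, hρ, hρS₁, hρS₂⟩ := hρ₁.paste hE₁ hE₂ hz hρ₂
  refine ⟨ρ, hρ, ?_⟩
  rw [hρS₁ u hu, hρS₂ w hw]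
  linear_combination hd₁ + hd₂

lemma UDP.sup_of_pathsInf_eq_add (hE₁ : ∀ a b, G₁.Adj a b → a ∈ S₁ ∧ b ∈ S₁)
    (hE₂ : ∀ a b, G₂.Adj a b → a ∈ S₂ ∧ b ∈ S₂) (hz : S₁ ∩ S₂ = {z})
    (hc₁ : ∀ a ∈ S₁, ∀ b ∈ S₁, G₁.Reachable a b) (hc₂ : ∀ a ∈ S₂, ∀ b ∈ S₂, G₂.Reachable a b)
    (h₁ : UDP G₁ α) (h₂ : UDP G₂ α)
    (hsum : ∀ u ∈ S₁, ∀ w ∈ S₂,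
      pathsInf (G₁ ⊔ G₂) α u w = pathsInf (G₁ ⊔ G₂) α u z + pathsInf (G₁ ⊔ G₂) α z w) :
    UDP (G₁ ⊔ G₂) α := by
  obtain ⟨hz₁, hz₂⟩ : z ∈ S₁ ∧ z ∈ S₂ := hz.ge rfl
  have hsum' : ∀ u ∈ S₁, ∀ w ∈ S₂,
      pathsInf (G₁ ⊔ G₂) α u w ≤ pathsInf G₁ α u z + pathsInf G₂ α z w := fun u hu w hw =>
    (hsum u hu w hw).le.trans (add_le_add (pathsInf_anti le_sup_left u z)
      (pathsInf_anti le_sup_right z w))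
  intro u w hr x hx
  rcases eq_or_ne u w with rfl | huw
  · rw [pathsInf_self, Ideal.mem_bot] at hx
    exact ⟨0, isSpline_zero, by simp [hx]⟩
  rcases mem_union_of_reachable_of_ne hE₁ hE₂ hr huw with hu | hu <;>
    rcases mem_union_of_reachable_of_ne hE₁ hE₂ hr.symm huw.symm with hw | hw
  · exact exists_isSpline_sup_of_mem_left hE₁ hE₂ hz.subset h₁ hu hw (hc₁ u hu w hw) hx
  · exact exists_isSpline_sup_of_mem_left_of_mem_right hE₁ hE₂ hz.subset h₁ h₂ hu hw
      (hc₁ u hu z hz₁) (hc₂ z hz₂ w hw) (hsum' u hu w hw hx)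
  · have hx' : -x ∈ pathsInf (G₁ ⊔ G₂) α w u := neg_mem (pathsInf_comm (α := α) u w ▸ hx)
    obtain ⟨ρ, hρ, hd⟩ := exists_isSpline_sup_of_mem_left_of_mem_right hE₁ hE₂ hz.subset h₁ h₂
      hw hu (hc₁ w hw z hz₁) (hc₂ z hz₂ u hu) (hsum' w hw u hu hx')
    exact ⟨ρ, hρ, by linear_combination -hd⟩
  · rw [sup_comm] at hx ⊢
    exact exists_isSpline_sup_of_mem_left hE₂ hE₁ (Set.inter_comm S₁ S₂ ▸ hz.subset) h₂ hu hw
      (hc₂ u hu w hw) hx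

end Pasting

end Splines

theorem pasted_UDP_iff {V R : Type*} [CommRing R]
    (G₁ G₂ : SimpleGraph V) (α : Sym2 V → Ideal R) (S₁ S₂ : Set V) (z : V)
    (hE₁ : ∀ a b, G₁.Adj a b → a ∈ S₁ ∧ b ∈ S₁)
    (hE₂ : ∀ a b, G₂.Adj a b → a ∈ S₂ ∧ b ∈ S₂)
    (hz : S₁ ∩ S₂ = {z})
    (hc₁ : ∀ a ∈ S₁, ∀ b ∈ S₁, G₁.Reachable a b)
    (hc₂ : ∀ a ∈ S₂, ∀ b ∈ S₂, G₂.Reachable a b)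
    (h₁ : UDP G₁ α) (h₂ : UDP G₂ α) :
    UDP (G₁ ⊔ G₂) α ↔
      ∀ u ∈ S₁, ∀ w ∈ S₂,
        pathsInf (G₁ ⊔ G₂) α u w =
          pathsInf (G₁ ⊔ G₂) α u z + pathsInf (G₁ ⊔ G₂) α z w := by
  refine ⟨fun hUDP u hu w hw => le_antisymm ?_ ?_,
    UDP.sup_of_pathsInf_eq_add hE₁ hE₂ hz hc₁ hc₂ h₁ h₂⟩
  · obtain ⟨hz₁, hz₂⟩ : z ∈ S₁ ∧ z ∈ S₂ := hz.ge rfl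
    exact hUDP.pathsInf_le_add
      (((hc₁ u hu z hz₁).mono le_sup_left).trans ((hc₂ z hz₂ w hw).mono le_sup_right)) z
  · exact add_pathsInf_le_of_forall_mem_support fun p _ =>
      mem_support_of_mem_left_of_mem_right hE₁ hE₂ hz.subset p hu hw
end

section
/- In an integral domain R, the following are equivalent: (1) R is a Prüfer domain; (2) for all nonzero ideals I, J, K of R: I + (J ∩ K) = (I + J) ∩ (I + K); (3) for all nonzero ideals I, J, K of R: I ∩ (J + K) = (I ∩ J) + (I ∩ K). -/
section Lattice

variable {α : Type*} [Lattice α]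

theorem sup_inf_left_of_ne_bot [OrderBot α]
    (h : ∀ a b c : α, a ≠ ⊥ → b ≠ ⊥ → c ≠ ⊥ → a ⊔ b ⊓ c = (a ⊔ b) ⊓ (a ⊔ c)) (a b c : α) :
    a ⊔ b ⊓ c = (a ⊔ b) ⊓ (a ⊔ c) := by
  rcases eq_or_ne a ⊥ with rfl | ha; · simp
  rcases eq_or_ne b ⊥ with rfl | hb; · simp
  rcases eq_or_ne c ⊥ with rfl | hc; · simp
  exact h a b c ha hb hc

theorem inf_sup_left_of_ne_bot [OrderBot α]
    (h : ∀ a b c : α, a ≠ ⊥ → b ≠ ⊥ → c ≠ ⊥ → a ⊓ (b ⊔ c) = a ⊓ b ⊔ a ⊓ c) (a b c : α) :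
    a ⊓ (b ⊔ c) = a ⊓ b ⊔ a ⊓ c := by
  rcases eq_or_ne a ⊥ with rfl | ha; · simp
  rcases eq_or_ne b ⊥ with rfl | hb; · simp
  rcases eq_or_ne c ⊥ with rfl | hc; · simp
  exact h a b c ha hb hc

theorem inf_sup_left_of_sup_inf_left (h : ∀ a b c : α, a ⊔ b ⊓ c = (a ⊔ b) ⊓ (a ⊔ c))
    (a b c : α) : a ⊓ (b ⊔ c) = a ⊓ b ⊔ a ⊓ c :=
  letI : DistribLattice α := { ‹Lattice α› with le_sup_inf := fun x y z => (h x y z).ge }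
  inf_sup_left a b c

end Lattice

namespace Ideal

variable {R : Type*} [CommRing R]

theorem mul_mem_sup_mul_inf_of_inf_sup_left
    (h : ∀ I J K : Ideal R, I ⊓ (J ⊔ K) = I ⊓ J ⊔ I ⊓ K) (a b : R) :
    a * b ∈ (span {a} ⊔ span {b}) * (span {a} ⊓ span {b}) := by
  have ha : a ∈ span {a} ⊓ (span {b} ⊔ span {a + b}) :=
    ⟨mem_span_singleton_self a, Submodule.mem_sup.mpr
      ⟨-b, neg_mem (mem_span_singleton_self b), a + b, mem_span_singleton_self _, by ring⟩⟩
  rw [h] at ha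
  obtain ⟨m, ⟨hma, hmb⟩, n, ⟨hna, hnab⟩, hmn⟩ := Submodule.mem_sup.mp ha
  obtain ⟨c, rfl⟩ := mem_span_singleton'.mp hnab
  have hcb : c * b ∈ span {a} ⊓ span {b} := by
    refine ⟨?_, mul_mem_left _ c (mem_span_singleton_self b)⟩
    rw [show c * b = c * (a + b) - c * a by ring]
    exact sub_mem hna (mul_mem_left _ c (mem_span_singleton_self a))
  rw [show a * b = b * m + (a + b) * (c * b) by linear_combination -b * hmn]
  refine add_mem (mul_mem_mul (mem_sup_right (mem_span_singleton_self b)) ⟨hma, hmb⟩)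
    (mul_mem_mul ?_ hcb)
  exact add_mem (mem_sup_left (mem_span_singleton_self a))
    (mem_sup_right (mem_span_singleton_self b))

theorem sup_mul_inf_of_inf_sup_left (h : ∀ I J K : Ideal R, I ⊓ (J ⊔ K) = I ⊓ J ⊔ I ⊓ K)
    (I J : Ideal R) : (I ⊔ J) * (I ⊓ J) = I * J := by
  refine le_antisymm ?_ (mul_le.mpr fun a ha b hb => ?_)
  · rw [sup_mul]
    exact sup_le (Ideal.mul_mono_right inf_le_right)
      ((Ideal.mul_mono_right inf_le_left).trans_eq (mul_comm J I))
  · have hsup : span {a} ⊔ span {b} ≤ I ⊔ J := sup_le_sup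
      ((span_singleton_le_iff_mem I).mpr ha) ((span_singleton_le_iff_mem J).mpr hb)
    have hinf : span {a} ⊓ span {b} ≤ I ⊓ J := inf_le_inf
      ((span_singleton_le_iff_mem I).mpr ha) ((span_singleton_le_iff_mem J).mpr hb)
    exact Ideal.mul_mono hsup hinf (mul_mem_sup_mul_inf_of_inf_sup_left h a b)

end Ideal

section Prufer

variable {R : Type*} [CommRing R] [IsDomain R]

/- `(j, k)` is locally principal: writing `1 = j P + k Q` with `P, Q ∈ (j, k)⁻¹`,
the elements `r = j P` and `u = k Q` lie in `R`. -/
open FractionalIdeal in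
theorem IsPruferDomain.exists_add_eq_one_mul_mem_span_singleton (hR : IsPruferDomain R)
    (j k : R) : ∃ r u : R, r + u = 1 ∧ r * k ∈ Ideal.span {j} ∧ u * j ∈ Ideal.span {k} := by
  set I : Ideal R := Ideal.span {j} ⊔ Ideal.span {k}
  by_cases hI : I = ⊥
  · obtain ⟨hj, hk⟩ : j = 0 ∧ k = 0 := by simpa [I, Ideal.span_singleton_eq_bot] using hI
    exact ⟨1, 0, add_zero 1, by simp [hk], by simp⟩
  set f := algebraMap R (FractionRing R)
  set F : FractionalIdeal (nonZeroDivisors R) (FractionRing R) := ↑I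
  have hF : F = spanSingleton _ (f j) + spanSingleton _ (f k) := by
    simp only [F, I, f, coeIdeal_sup, coeIdeal_span_singleton]
  have hFF : F * F⁻¹ = 1 := (mul_inv_cancel_iff_isUnit _).mpr
    (hR I hI ((Submodule.fg_span_singleton j).sup (Submodule.fg_span_singleton k)))
  have hone : (1 : FractionRing R) ∈ spanSingleton _ (f j) * F⁻¹ + spanSingleton _ (f k) * F⁻¹ := by
    rw [← add_mul, ← hF, hFF]; exact one_mem_one _
  obtain ⟨_, hjP, _, hkQ, hPQ⟩ := (mem_add _ _ _).mp hone
  obtain ⟨P, hP, rfl⟩ := mem_singleton_mul.mp hjP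
  obtain ⟨Q, hQ, rfl⟩ := mem_singleton_mul.mp hkQ
  have integral : ∀ x ∈ I, ∀ y ∈ F⁻¹, ∃ z : R, f z = f x * y := fun x hx y hy =>
    (mem_one_iff _).mp (hFF ▸ mul_mem_mul ((mem_coeIdeal _).mpr ⟨x, hx, rfl⟩) hy)
  have hj : j ∈ I := Ideal.mem_sup_left (Ideal.mem_span_singleton_self j)
  have hk : k ∈ I := Ideal.mem_sup_right (Ideal.mem_span_singleton_self k)
  obtain ⟨r, hr⟩ := integral j hj P hP
  obtain ⟨s, hs⟩ := integral k hk P hP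
  obtain ⟨t, ht⟩ := integral j hj Q hQ
  obtain ⟨u, hu⟩ := integral k hk Q hQ
  have inj := IsFractionRing.injective R (FractionRing R)
  refine ⟨r, u, inj ?_, Ideal.mem_span_singleton'.mpr ⟨s, inj ?_⟩,
    Ideal.mem_span_singleton'.mpr ⟨t, inj ?_⟩⟩
  · rw [map_add, map_one, hr, hu, hPQ]
  · rw [map_mul, map_mul, hr, hs]; ring
  · rw [map_mul, map_mul, hu, ht]; ring

theorem IsPruferDomain.sup_inf_left (hR : IsPruferDomain R) (I J K : Ideal R) :
    I ⊔ J ⊓ K = (I ⊔ J) ⊓ (I ⊔ K) := by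
  refine le_antisymm sup_inf_le fun x hx => ?_
  obtain ⟨⟨i₁, hi₁, j, hj, rfl⟩, ⟨i₂, hi₂, k, hk, hx⟩⟩ :=
    hx.imp Submodule.mem_sup.mp Submodule.mem_sup.mp
  obtain ⟨r, u, hru, hrk, huj⟩ := hR.exists_add_eq_one_mul_mem_span_singleton j k
  have hjk : j - k ∈ I := by
    rw [show j - k = i₂ - i₁ by linear_combination -hx]
    exact I.sub_mem hi₂ hi₁
  have hrkJK : r * k ∈ J ⊓ K :=
    ⟨(Ideal.span_singleton_le_iff_mem J).mpr hj hrk, K.mul_mem_left r hk⟩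
  have hujJK : u * j ∈ J ⊓ K :=
    ⟨J.mul_mem_left u hj, (Ideal.span_singleton_le_iff_mem K).mpr hk huj⟩
  refine Submodule.mem_sup.mpr ⟨i₁ + r * (j - k), I.add_mem hi₁ (I.mul_mem_left r hjk),
    r * k + u * j, (J ⊓ K).add_mem hrkJK hujJK, by linear_combination j * hru⟩

open FractionalIdeal in
theorem isPruferDomain_of_inf_sup_left (h : ∀ I J K : Ideal R, I ⊓ (J ⊔ K) = I ⊓ J ⊔ I ⊓ K) :
    IsPruferDomain R := by
  intro I hI hfg
  induction I, hfg using Submodule.fg_induction with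
  | singleton x =>
    have hx : algebraMap R (FractionRing R) x ≠ 0 := by simp_all
    rw [show Submodule.span R {x} = Ideal.span {x} from rfl, coeIdeal_span_singleton]
    exact (mul_inv_cancel_iff_isUnit _).mp (spanSingleton_mul_inv _ hx)
  | sup I J _ _ hIunit hJunit =>
    rcases eq_or_ne I ⊥ with rfl | hI'
    · simpa using hJunit (by simpa using hI)
    rcases eq_or_ne J ⊥ with rfl | hJ'
    · simpa using hIunit (by simpa using hI)
    have hIJ : IsUnit ((I ⊔ J : Ideal R) * (I ⊓ J : Ideal R) :
        FractionalIdeal (nonZeroDivisors R) (FractionRing R)) := by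
      rw [← coeIdeal_mul, Ideal.sup_mul_inf_of_inf_sup_left h, coeIdeal_mul]
      exact (hIunit hI').mul (hJunit hJ')
    exact isUnit_of_mul_isUnit_left hIJ

end Prufer

theorem prufer_tfae (R : Type*) [CommRing R] [IsDomain R] :
    List.TFAE
      [IsPruferDomain R,
       ∀ I J K : Ideal R, I ≠ ⊥ → J ≠ ⊥ → K ≠ ⊥ → I + J ⊓ K = (I + J) ⊓ (I + K),
       ∀ I J K : Ideal R, I ≠ ⊥ → J ≠ ⊥ → K ≠ ⊥ → I ⊓ (J + K) = I ⊓ J + I ⊓ K] := by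
  tfae_have 1 → 2 := fun hR I J K _ _ _ => hR.sup_inf_left I J K
  tfae_have 2 → 3 := fun h I J K _ _ _ =>
    inf_sup_left_of_sup_inf_left (sup_inf_left_of_ne_bot h) I J K
  tfae_have 3 → 1 := fun h => isPruferDomain_of_inf_sup_left (inf_sup_left_of_ne_bot h)
  tfae_finish
end

section
/- An integral domain R is a Prüfer domain if and only if the Elementwise Chinese Remainder Theorem holds over R: for any elements x₁, ..., xₙ ∈ R and ideals I₁, ..., Iₙ of R, the system of congruences x ≡ xⱼ mod Iⱼ (for 1 ≤ j ≤ n) has a solution in R if and only if xⱼ − xₖ ∈ Iⱼ + Iₖ for all j, k. -/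
/-!
Both sides are equivalent to distributivity of the lattice of ideals. The elementwise CRT for
three congruences `x ≡ x mod I`, `x ≡ 0 mod J`, `x ≡ 0 mod K` is exactly the distributive law
`(I + J) ∩ (I + K) = I + J ∩ K`; conversely, adding one congruence at a time, the CRT only needs
`(⋂ Iⱼ) + Iₙ = ⋂ (Iⱼ + Iₙ)`.

Distributivity is in turn equivalent to `(a) : (b) + (b) : (a) = R` for all `a, b`. Given
`u + v = 1` with `u b = a t` and `v a = b s`, one has `(a, b) (u, s) = (a)`, so `(a, b)` is
invertible as soon as `a ≠ 0`; a finitely generated ideal is then invertible by induction on the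
number of generators, using `(A + B) (B + C) (C + A) = (A + B + C) (A B + B C + C A)`.
Conversely, if `(a, b)⁻¹` exists, writing `1 = a p + b q` with `p, q ∈ (a, b)⁻¹` gives
`u = a p` and `v = b q`.
-/

open FractionalIdeal nonZeroDivisors

/-- Arithmetical ring: the lattice of ideals is distributive. -/
def IsArithmetical (R : Type*) [CommRing R] : Prop :=
  ∀ I J K : Ideal R, (I ⊔ J) ⊓ (I ⊔ K) ≤ I ⊔ J ⊓ K

/-- `(a) : (b) + (b) : (a) = R` for all `a, b`. -/
def ColonsComaximal (R : Type*) [CommRing R] : Prop :=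
  ∀ a b : R, ∃ u v : R, u + v = 1 ∧ a ∣ u * b ∧ b ∣ v * a

theorem add_mul_add_mul_add_eq {α : Type*} [IdemCommSemiring α] (a b c : α) :
    (a + b) * (b + c) * (c + a) = (a + b + c) * (a * b + b * c + c * a) := by
  -- the two sides differ only in `2 * (a * b * c)` versus `3 * (a * b * c)`
  have h2 : (2 : α) = 1 := by rw [← one_add_one_eq_two, add_idem]
  have h3 : (3 : α) = 1 := by rw [← two_add_one_eq_three, h2, add_idem]
  ring_nf
  rw [h2, h3]

section

variable {R : Type*} [CommRing R]

theorem FractionalIdeal.isUnit_coeIdeal_sup_sup {S : Submonoid R} {P : Type*} [CommRing P]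
    [Algebra R P] {A B C : Ideal R}
    (hAB : IsUnit ((A ⊔ B : Ideal R) : FractionalIdeal S P))
    (hBC : IsUnit ((B ⊔ C : Ideal R) : FractionalIdeal S P))
    (hCA : IsUnit ((C ⊔ A : Ideal R) : FractionalIdeal S P)) :
    IsUnit ((A ⊔ B ⊔ C : Ideal R) : FractionalIdeal S P) := by
  have key : (A ⊔ B) * (B ⊔ C) * (C ⊔ A) = (A ⊔ B ⊔ C) * (A * B + B * C + C * A) := by
    simpa only [Submodule.add_eq_sup] using add_mul_add_mul_add_eq A B C
  have := (hAB.mul hBC).mul hCA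
  rw [← coeIdeal_mul, ← coeIdeal_mul, key, coeIdeal_mul] at this
  exact isUnit_of_mul_isUnit_left this

theorem exists_add_eq_one_dvd_of_isUnit_span_pair {K : Type*} [Field K] [Algebra R K]
    [IsFractionRing R K] {a b : R}
    (h : IsUnit ((Ideal.span {a, b} : Ideal R) : FractionalIdeal R⁰ K)) :
    ∃ u v : R, u + v = 1 ∧ a ∣ u * b ∧ b ∣ v * a := by
  obtain ⟨J, hJ⟩ := h.exists_right_inv
  have integral : ∀ c ∈ Ideal.span {a, b}, ∀ x ∈ J,
      ∃ r : R, algebraMap R K r = algebraMap R K c * x :=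
    fun c hc x hx ↦ (mem_one_iff _).1 (hJ ▸ mul_mem_mul ((mem_coeIdeal _).2 ⟨c, hc, rfl⟩) hx)
  have h1 : (1 : K) ∈
      spanSingleton R⁰ (algebraMap R K a) * J + spanSingleton R⁰ (algebraMap R K b) * J := by
    rw [← add_mul, ← coeIdeal_span_singleton, ← coeIdeal_span_singleton, ← coeIdeal_sup,
      ← Ideal.span_insert, hJ]
    exact one_mem_one _
  obtain ⟨_, hap, _, hbq, hpq⟩ := (mem_add _ _ _).1 h1
  obtain ⟨p, hp, rfl⟩ := mem_singleton_mul.1 hap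
  obtain ⟨q, hq, rfl⟩ := mem_singleton_mul.1 hbq
  have ha : a ∈ Ideal.span {a, b} := Ideal.subset_span (by simp)
  have hb : b ∈ Ideal.span {a, b} := Ideal.subset_span (by simp)
  obtain ⟨u, hu⟩ := integral a ha p hp
  obtain ⟨t, ht⟩ := integral b hb p hp
  obtain ⟨s, hs⟩ := integral a ha q hq
  obtain ⟨v, hv⟩ := integral b hb q hq
  have inj := IsFractionRing.injective R K
  refine ⟨u, v, inj ?_, ⟨t, inj ?_⟩, ⟨s, inj ?_⟩⟩ <;>
    simp only [map_add, map_mul, map_one, hu, hv, ht, hs, hpq] <;> ring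

theorem IsPruferDomain.colonsComaximal [IsDomain R] (h : IsPruferDomain R) :
    ColonsComaximal R := by
  intro a b
  rcases eq_or_ne a 0 with rfl | ha
  · exact ⟨0, 1, zero_add 1, by simp, by simp⟩
  refine exists_add_eq_one_dvd_of_isUnit_span_pair (h _ ?_ (Submodule.fg_span (Set.toFinite _)))
  rw [ne_eq, Ideal.span_eq_bot]
  exact fun hab ↦ ha (hab a (by simp))

namespace IsArithmetical

abbrev distribLattice (h : IsArithmetical R) : DistribLattice (Ideal R) :=
  { (inferInstance : Lattice (Ideal R)) with le_sup_inf := h }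

theorem exists_forall_mem_sub_mem {ι : Type*} (h : IsArithmetical R)
    (x : ι → R) (I : ι → Ideal R) (s : Finset ι)
    (hx : ∀ i ∈ s, ∀ j ∈ s, x i - x j ∈ I i ⊔ I j) : ∃ y, ∀ i ∈ s, y - x i ∈ I i := by
  classical
  let := h.distribLattice
  induction s using Finset.induction_on with
  | empty => exact ⟨0, by simp⟩
  | insert a s ha ih =>
    obtain ⟨y, hy⟩ := ih fun i hi j hj ↦
      hx i (Finset.mem_insert_of_mem hi) j (Finset.mem_insert_of_mem hj)
    have hya : y - x a ∈ s.inf I ⊔ I a := by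
      rw [Finset.inf_sup_distrib_right, Submodule.mem_finsetInf]
      intro i hi
      rw [← sub_add_sub_cancel y (x i) (x a)]
      exact add_mem (Submodule.mem_sup_left (hy i hi))
        (hx i (Finset.mem_insert_of_mem hi) a (Finset.mem_insert_self a s))
    obtain ⟨c, hc, d, hd, hcd⟩ := Submodule.mem_sup.1 hya
    refine ⟨y - c, Finset.forall_mem_insert _ _ _ |>.2 ⟨?_, fun i hi ↦ ?_⟩⟩
    · have : y - c - x a = d := by linear_combination -hcd
      exact this ▸ hd
    · rw [sub_right_comm]
      exact sub_mem (hy i hi) (Submodule.mem_finsetInf.1 hc i hi)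

theorem of_exists_forall_sub_mem_fin_three
    (h : ∀ (x : Fin 3 → R) (I : Fin 3 → Ideal R),
      (∀ j k, x j - x k ∈ I j ⊔ I k) → ∃ y, ∀ j, y - x j ∈ I j) :
    IsArithmetical R := by
  intro I J K x hx
  obtain ⟨hIJ, hIK⟩ := Submodule.mem_inf.1 hx
  have hJI : x ∈ J ⊔ I := sup_comm I J ▸ hIJ
  have hKI : x ∈ K ⊔ I := sup_comm I K ▸ hIK
  obtain ⟨y, hy⟩ := h ![x, 0, 0] ![I, J, K] fun j k ↦ by
    fin_cases j <;> fin_cases k <;> simp [hIJ, hIK, hJI, hKI]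
  have hyI : y - x ∈ I := hy 0
  have hyJ : y ∈ J := by simpa using hy 1
  have hyK : y ∈ K := by simpa using hy 2
  have := Submodule.add_mem_sup (neg_mem hyI) (Submodule.mem_inf.2 ⟨hyJ, hyK⟩)
  rwa [neg_sub, sub_add_cancel] at this

theorem colonsComaximal (h : IsArithmetical R) : ColonsComaximal R := by
  let := h.distribLattice
  intro a b
  have hb : b ∈ Ideal.span {b} ⊓ (Ideal.span {a} ⊔ Ideal.span {a + b}) := by
    refine ⟨Ideal.mem_span_singleton_self b, ?_⟩
    have := sub_mem (Submodule.mem_sup_right (Ideal.mem_span_singleton_self (a + b)))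
      (Submodule.mem_sup_left (Ideal.mem_span_singleton_self a))
    rwa [add_sub_cancel_left] at this
  rw [inf_sup_left] at hb
  obtain ⟨c, ⟨-, hca⟩, d, ⟨hdb, hdab⟩, hcd⟩ := Submodule.mem_sup.1 hb
  obtain ⟨r, rfl⟩ := Ideal.mem_span_singleton'.1 hdab
  replace hca := Ideal.mem_span_singleton.1 hca
  replace hdb := Ideal.mem_span_singleton.1 hdb
  refine ⟨1 - r, r, sub_add_cancel 1 r, ?_, ?_⟩
  · have : (1 - r) * b = c + r * a := by linear_combination -hcd
    exact this ▸ hca.add (dvd_mul_left a r)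
  · have : r * a = r * (a + b) - r * b := by ring
    exact this ▸ hdb.sub (dvd_mul_left b r)

end IsArithmetical

namespace ColonsComaximal

theorem isArithmetical (h : ColonsComaximal R) : IsArithmetical R := by
  intro I J K x hx
  obtain ⟨hIJ, hIK⟩ := Submodule.mem_inf.1 hx
  obtain ⟨i, hi, j, hj, rfl⟩ := Submodule.mem_sup.1 hIJ
  obtain ⟨i', hi', k, hk, hik⟩ := Submodule.mem_sup.1 hIK
  obtain ⟨u, v, huv, ⟨t, ht⟩, ⟨s, hs⟩⟩ := h j k
  have hJK : u * k + v * j ∈ J ⊓ K :=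
    ⟨add_mem (ht ▸ J.mul_mem_right t hj) (J.mul_mem_left v hj),
      add_mem (K.mul_mem_left u hk) (hs ▸ K.mul_mem_right s hk)⟩
  refine Submodule.mem_sup.2 ⟨i + u * (i' - i), add_mem hi (I.mul_mem_left u (sub_mem hi' hi)),
    _, hJK, ?_⟩
  linear_combination u * hik + j * huv

variable [IsDomain R] {K : Type*} [Field K] [Algebra R K] [IsFractionRing R K]

theorem isUnit_span_pair (h : ColonsComaximal R) {a : R} (ha : a ≠ 0) (b : R) :
    IsUnit ((Ideal.span {a, b} : Ideal R) : FractionalIdeal R⁰ K) := by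
  obtain ⟨u, v, huv, ⟨t, ht⟩, ⟨s, hs⟩⟩ := h a b
  have hmul : Ideal.span {a, b} * Ideal.span {u, s} = Ideal.span {a} := by
    rw [Ideal.span_pair_mul_span_pair]
    refine le_antisymm (Ideal.span_le.2 ?_) (Ideal.span_le.2 ?_)
    · simp only [Set.insert_subset_iff, Set.singleton_subset_iff, SetLike.mem_coe,
        Ideal.mem_span_singleton]
      exact ⟨dvd_mul_right a u, dvd_mul_right a s, ⟨t, by linear_combination ht⟩,
        ⟨v, by linear_combination -hs⟩⟩
    · have : a * u + b * s = a := by linear_combination a * huv - hs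
      have hmem : a * u + b * s ∈ Ideal.span {a * u, a * s, b * u, b * s} :=
        add_mem (Ideal.subset_span (by simp)) (Ideal.subset_span (by simp))
      rw [this] at hmem
      exact Set.singleton_subset_iff.2 hmem
  have hunit := IsUnit.of_mul_eq_one _ (coe_ideal_span_singleton_mul_inv K ha)
  rw [← hmul, coeIdeal_mul] at hunit
  exact isUnit_of_mul_isUnit_left hunit

theorem isUnit_span_insert (h : ColonsComaximal R) (s : Finset R) {a : R} (ha : a ≠ 0) :
    IsUnit ((Ideal.span (insert a ↑s) : Ideal R) : FractionalIdeal R⁰ K) := by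
  classical
  induction s using Finset.induction_on generalizing a with
  | empty => simpa [Set.pair_eq_singleton] using h.isUnit_span_pair (K := K) ha a
  | insert b s _ ih =>
    rw [Finset.coe_insert]
    -- a zero generator is dropped: it would spoil the invertibility of `(b) + (s)`
    rcases eq_or_ne b 0 with rfl | hb
    · rw [Set.insert_comm, Ideal.span_insert_zero]
      exact ih ha
    · rw [Ideal.span_insert, Ideal.span_insert, ← sup_assoc]
      refine isUnit_coeIdeal_sup_sup ?_ ?_ ?_
      · rw [← Ideal.span_insert]
        exact h.isUnit_span_pair ha b
      · rw [← Ideal.span_insert]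
        exact ih hb
      · rw [sup_comm, ← Ideal.span_insert]
        exact ih ha

theorem isPruferDomain (h : ColonsComaximal R) : IsPruferDomain R := by
  classical
  rintro _ hI ⟨s, rfl⟩
  obtain ⟨a, has, ha⟩ : ∃ a ∈ s, a ≠ 0 := by
    by_contra! hs
    exact hI (Submodule.span_eq_bot.2 hs)
  rw [← Finset.insert_erase has, Finset.coe_insert]
  exact h.isUnit_span_insert (s.erase a) ha

end ColonsComaximal

end

theorem prufer_iff_elementwise_CRT (R : Type*) [CommRing R] [IsDomain R] :
    IsPruferDomain R ↔
      ∀ (n : ℕ) (x : Fin n → R) (I : Fin n → Ideal R),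
        (∃ y : R, ∀ j, y - x j ∈ I j) ↔ ∀ j k, x j - x k ∈ I j + I k := by
  refine ⟨fun hP n x I ↦ ⟨fun ⟨y, hy⟩ j k ↦ ?_, fun hx ↦ ?_⟩, fun hCRT ↦ ?_⟩
  · rw [← sub_sub_sub_cancel_left (x k) (x j) y]
    exact sub_mem (Submodule.mem_sup_right (hy k)) (Submodule.mem_sup_left (hy j))
  · simpa using hP.colonsComaximal.isArithmetical.exists_forall_mem_sub_mem x I Finset.univ
      fun i _ j _ ↦ hx i j
  · exact (IsArithmetical.of_exists_forall_sub_mem_fin_three fun x I hx ↦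
      (hCRT 3 x I).2 hx).colonsComaximal.isPruferDomain
end
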